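/- arXiv:0801.1246 — 8 statements merged into one kernel-verified Lean document; each statement's English description precedes it below -/
import Mathlib

section
/- Let α, β, γ, δ ∈ ℝ with α + δ ≠ 0 and αγ + βδ = 0, and suppose (γ,δ) ≠ (−β,α). If a skew-adjoint map A (given on the basis by A e₁ = b e₂ + c e₃, A e₂ = −b e₁ + a e₃, A e₃ = c e₁ + a e₂) is a derivation of the Lie algebra 𝔤₅, i.e. A[X,Y] = [AX,Y] + [X,AY] for all X,Y, then a = b = c = 0, i.e. A = 0. -/
/-- The bracket of the Lie algebra 𝔤₅ on ℝ³ = ℝ × ℝ × ℝ. -/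
def br5 (α β γ δ : ℝ) (x y : ℝ × ℝ × ℝ) : ℝ × ℝ × ℝ :=
  (α * (x.1 * y.2.2 - x.2.2 * y.1) + γ * (x.2.1 * y.2.2 - x.2.2 * y.2.1),
   β * (x.1 * y.2.2 - x.2.2 * y.1) + δ * (x.2.1 * y.2.2 - x.2.2 * y.2.1),
   0)

/-- The Lorentzian skew-adjoint map with A e₁ = b e₂ + c e₃,
A e₂ = −b e₁ + a e₃, A e₃ = c e₁ + a e₂. -/
def skewMap (a b c : ℝ) (x : ℝ × ℝ × ℝ) : ℝ × ℝ × ℝ :=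
  (-b * x.2.1 + c * x.2.2, b * x.1 + a * x.2.2, c * x.1 + a * x.2.1)

/-!
Evaluating the derivation identity on the basis pairs (e₁,e₂), (e₁,e₃), (e₂,e₃) gives the linear
system αa − γc = βa − δc = βa + αc = δa + γc = 0 and (β + γ)b = (α − δ)b = 0. If b ≠ 0 the last
two equations force (γ, δ) = (−β, α). Adding suitable pairs of the others gives (α + δ)a = 0 and
(α + δ)c = 0.
-/

def IsDerivation {V : Type*} [Add V] (D : V → V) (bracket : V → V → V) : Prop :=
  ∀ X Y, D (bracket X Y) = bracket (D X) Y + bracket X (D Y)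

namespace IsDerivation

variable {α β γ δ a b c : ℝ}

theorem g5_eqns_e₁_e₂
    (hD : IsDerivation (skewMap a b c) (br5 α β γ δ)) : α * a - γ * c = 0 ∧ β * a - δ * c = 0 := by
  have h := hD (1, 0, 0) (0, 1, 0)
  norm_num [skewMap, br5, Prod.ext_iff] at h
  constructor <;> linarith

theorem g5_eqns_e₁_e₃
    (hD : IsDerivation (skewMap a b c) (br5 α β γ δ)) : (β + γ) * b = 0 ∧ β * a + α * c = 0 := by
  have h := hD (1, 0, 0) (0, 0, 1)
  norm_num [skewMap, br5, Prod.ext_iff] at h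
  constructor <;> linarith

theorem g5_eqns_e₂_e₃
    (hD : IsDerivation (skewMap a b c) (br5 α β γ δ)) : (α - δ) * b = 0 ∧ δ * a + γ * c = 0 := by
  have h := hD (0, 1, 0) (0, 0, 1)
  norm_num [skewMap, br5, Prod.ext_iff] at h
  constructor <;> linarith

end IsDerivation

theorem eq_zero_of_add_mul_eq_zero_of_sub_mul_eq_zero {α β γ δ b : ℝ} (h3 : (γ, δ) ≠ (-β, α))
    (hβγ : (β + γ) * b = 0) (hαδ : (α - δ) * b = 0) : b = 0 := by
  by_contra hb
  refine h3 (Prod.ext ?_ ?_)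
  · linarith [(mul_eq_zero.1 hβγ).resolve_right hb]
  · linarith [(mul_eq_zero.1 hαδ).resolve_right hb]

theorem g5_skew_derivation_zero_general (α β γ δ a b c : ℝ)
    (h1 : α + δ ≠ 0) (h3 : (γ, δ) ≠ (-β, α))
    (hder : ∀ X Y : ℝ × ℝ × ℝ,
      skewMap a b c (br5 α β γ δ X Y)
        = br5 α β γ δ (skewMap a b c X) Y + br5 α β γ δ X (skewMap a b c Y)) :
    a = 0 ∧ b = 0 ∧ c = 0 := by
  obtain ⟨h₁₂, h₁₂'⟩ := IsDerivation.g5_eqns_e₁_e₂ hder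
  obtain ⟨hb₁₃, h₁₃⟩ := IsDerivation.g5_eqns_e₁_e₃ hder
  obtain ⟨hb₂₃, h₂₃⟩ := IsDerivation.g5_eqns_e₂_e₃ hder
  have ha : (α + δ) * a = 0 := by linear_combination h₁₂ + h₂₃
  have hc : (α + δ) * c = 0 := by linear_combination h₁₃ - h₁₂'
  exact ⟨(mul_eq_zero.1 ha).resolve_left h1,
    eq_zero_of_add_mul_eq_zero_of_sub_mul_eq_zero h3 hb₁₃ hb₂₃,
    (mul_eq_zero.1 hc).resolve_left h1⟩

theorem g5_skew_derivation_zero (α β γ δ a b c : ℝ)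
    (h1 : α + δ ≠ 0) (h2 : α * γ + β * δ = 0) (h3 : (γ, δ) ≠ (-β, α))
    (hder : ∀ X Y : ℝ × ℝ × ℝ,
      skewMap a b c (br5 α β γ δ X Y)
        = br5 α β γ δ (skewMap a b c X) Y + br5 α β γ δ X (skewMap a b c Y)) :
    a = 0 ∧ b = 0 ∧ c = 0 :=
  g5_skew_derivation_zero_general α β γ δ a b c h1 h3 hder
end

section
/- Let α, β ∈ ℝ with α ≠ 0, and set γ = −β, δ = α (so α+δ = 2α ≠ 0 and αγ+βδ = 0 automatically). Then the skew-adjoint map A defined by A e₁ = e₂, A e₂ = −e₁, A e₃ = 0 is a derivation of the Lie algebra 𝔤₅ with these parameters, and every skew-adjoint derivation of this Lie algebra is a real multiple of A. -/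
/-!
Skew-adjoint maps for a Lorentzian form on ℝ³ make up 𝔰𝔬(2,1): a rotation of the
(e₁,e₂)-plane plus two boosts. Since [e₁,e₂] = 0, the derivation identity on (e₁,e₂) is a
linear system in the two boost parameters with determinant α² + β², so the boosts vanish.
-/

/-- Lorentzian inner product of signature (+,+,-) on ℝ³ = ℝ × ℝ × ℝ. -/
def lor (x y : ℝ × ℝ × ℝ) : ℝ := x.1 * y.1 + x.2.1 * y.2.1 - x.2.2 * y.2.2

/-- The bracket of 𝔤₅ with γ = −β, δ = α:
[e₁,e₂]=0, [e₁,e₃]=α e₁+β e₂, [e₂,e₃]=−β e₁+α e₂. -/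
def br5' (α β : ℝ) (x y : ℝ × ℝ × ℝ) : ℝ × ℝ × ℝ :=
  (α * (x.1 * y.2.2 - x.2.2 * y.1) + (-β) * (x.2.1 * y.2.2 - x.2.2 * y.2.1),
   β * (x.1 * y.2.2 - x.2.2 * y.1) + α * (x.2.1 * y.2.2 - x.2.2 * y.2.1),
   0)

/-- The map A with A e₁ = e₂, A e₂ = −e₁, A e₃ = 0. -/
def A0 (x : ℝ × ℝ × ℝ) : ℝ × ℝ × ℝ := (-x.2.1, x.1, 0)

def IsLorSkew (D : ℝ × ℝ × ℝ → ℝ × ℝ × ℝ) : Prop :=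
  ∀ x y, lor (D x) y + lor x (D y) = 0

def IsBr5Derivation (α β : ℝ) (D : ℝ × ℝ × ℝ → ℝ × ℝ × ℝ) : Prop :=
  ∀ X Y, D (br5' α β X Y) = br5' α β (D X) Y + br5' α β X (D Y)

/-- `t` rotates the (e₁,e₂)-plane; `u`, `v` are the boosts mixing e₃ with e₁ and e₂. -/
def lorSkew (t u v : ℝ) (x : ℝ × ℝ × ℝ) : ℝ × ℝ × ℝ :=
  (-t * x.2.1 + u * x.2.2, t * x.1 + v * x.2.2, u * x.1 + v * x.2.1)

theorem isBr5Derivation_A0 (α β : ℝ) : IsBr5Derivation α β A0 := by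
  intro X Y
  simp only [A0, br5', Prod.mk_add_mk, Prod.mk.injEq]
  refine ⟨by ring, by ring, by ring⟩

/-- Since `lor` is nondegenerate, skewness alone (without linearity) pins `D` down. -/
theorem exists_eq_lorSkew_of_isLorSkew {D : ℝ × ℝ × ℝ → ℝ × ℝ × ℝ} (h : IsLorSkew D) :
    ∃ t u v, D = lorSkew t u v := by
  refine ⟨(D (1, 0, 0)).2.1, (D (1, 0, 0)).2.2, (D (0, 1, 0)).2.2, funext fun x => ?_⟩
  have h11 := h (1, 0, 0) (1, 0, 0)
  have h22 := h (0, 1, 0) (0, 1, 0)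
  have h33 := h (0, 0, 1) (0, 0, 1)
  have h12 := h (1, 0, 0) (0, 1, 0)
  have h13 := h (1, 0, 0) (0, 0, 1)
  have h23 := h (0, 1, 0) (0, 0, 1)
  have hx1 := h x (1, 0, 0)
  have hx2 := h x (0, 1, 0)
  have hx3 := h x (0, 0, 1)
  simp only [lor, mul_one, mul_zero, add_zero, zero_add, sub_zero, zero_sub] at *
  ext <;> simp only [lorSkew]
  · linear_combination hx1 - x.1 / 2 * h11
  · linear_combination hx2 - x.1 * h12 - x.2.1 / 2 * h22
  · linear_combination -hx3 + x.1 * h13 + x.2.1 * h23 + x.2.2 / 2 * h33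

theorem boosts_eq_zero_of_isBr5Derivation_lorSkew {α β t u v : ℝ} (hαβ : α ^ 2 + β ^ 2 ≠ 0)
    (hD : IsBr5Derivation α β (lorSkew t u v)) : u = 0 ∧ v = 0 := by
  have h := hD (1, 0, 0) (0, 1, 0)
  simp only [lorSkew, br5', Prod.mk_add_mk, Prod.mk.injEq] at h
  obtain ⟨h1, h2, -⟩ := h
  have hu : (α ^ 2 + β ^ 2) * u = 0 := by linear_combination α * h2 - β * h1
  have hv : (α ^ 2 + β ^ 2) * v = 0 := by linear_combination -α * h1 - β * h2
  exact ⟨(mul_eq_zero.1 hu).resolve_left hαβ, (mul_eq_zero.1 hv).resolve_left hαβ⟩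

theorem lorSkew_zero_zero (t : ℝ) : lorSkew t 0 0 = t • A0 := by
  funext x
  simp only [lorSkew, A0, Pi.smul_apply, Prod.smul_mk, smul_eq_mul]
  ext <;> simp only <;> ring

theorem g5_symmetric_case_derivations (α β : ℝ) (hα : α ≠ 0) :
    (∀ X Y : ℝ × ℝ × ℝ,
      A0 (br5' α β X Y) = br5' α β (A0 X) Y + br5' α β X (A0 Y)) ∧
    (∀ A : (ℝ × ℝ × ℝ) →ₗ[ℝ] (ℝ × ℝ × ℝ),
      (∀ x y : ℝ × ℝ × ℝ, lor (A x) y + lor x (A y) = 0) →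
      (∀ X Y : ℝ × ℝ × ℝ,
        A (br5' α β X Y) = br5' α β (A X) Y + br5' α β X (A Y)) →
      ∃ t : ℝ, ∀ x : ℝ × ℝ × ℝ, A x = t • A0 x) := by
  refine ⟨isBr5Derivation_A0 α β, fun A hskew hder => ?_⟩
  obtain ⟨t, u, v, hA⟩ := exists_eq_lorSkew_of_isLorSkew hskew
  rw [hA] at hder
  obtain ⟨rfl, rfl⟩ := boosts_eq_zero_of_isBr5Derivation_lorSkew (by positivity) hder
  exact ⟨t, fun x => by rw [hA, lorSkew_zero_zero]; rfl⟩
end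

section
/- Let α, β, γ, δ ∈ ℝ with α + δ ≠ 0 and αγ − βδ = 0, and suppose (γ,δ) ≠ (β,α). Then the only skew-adjoint derivation of the Lie algebra 𝔤₆ (bracket [e₁,e₂]=α e₂+β e₃, [e₁,e₃]=γ e₂+δ e₃, [e₂,e₃]=0) is the zero map; equivalently the only solution (a,b,c) of the system (α−δ)a=0, (β−γ)a=0, αb−βc=0, γb−δc=0, γb+αc=0, δb+βc=0 is a=b=c=0. -/
/-! Adding the equations pairwise gives `(α + δ) b = 0` and `(α + δ) c = 0`, so `b = c = 0`
because the trace `α + δ` does not vanish. The two equations in `a` say that `a` is killed by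
both `α - δ` and `β - γ`, which cannot both vanish since `(γ, δ) ≠ (β, α)`. -/

section

variable {R : Type*} [CommRing R] [NoZeroDivisors R] {α β γ δ a b c : R}

theorem g6_skew_b_eq_zero (hαδ : α + δ ≠ 0) (e3 : α * b - β * c = 0) (e6 : δ * b + β * c = 0) :
    b = 0 := by
  have h : (α + δ) * b = 0 := by linear_combination e3 + e6
  exact (mul_eq_zero.mp h).resolve_left hαδ

theorem g6_skew_c_eq_zero (hαδ : α + δ ≠ 0) (e4 : γ * b - δ * c = 0) (e5 : γ * b + α * c = 0) :
    c = 0 := by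
  have h : (α + δ) * c = 0 := by linear_combination e5 - e4
  exact (mul_eq_zero.mp h).resolve_left hαδ

theorem g6_skew_a_eq_zero (hne : (γ, δ) ≠ (β, α)) (e1 : (α - δ) * a = 0)
    (e2 : (β - γ) * a = 0) : a = 0 := by
  by_contra ha
  have hδ : α - δ = 0 := (mul_eq_zero.mp e1).resolve_right ha
  have hγ : β - γ = 0 := (mul_eq_zero.mp e2).resolve_right ha
  exact hne (Prod.ext (sub_eq_zero.mp hγ).symm (sub_eq_zero.mp hδ).symm)

end

theorem g6_skew_derivation_zero_general (α β γ δ a b c : ℝ)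
    (h1 : α + δ ≠ 0) (h3 : (γ, δ) ≠ (β, α))
    (e1 : (α - δ) * a = 0) (e2 : (β - γ) * a = 0)
    (e3 : α * b - β * c = 0) (e4 : γ * b - δ * c = 0)
    (e5 : γ * b + α * c = 0) (e6 : δ * b + β * c = 0) :
    a = 0 ∧ b = 0 ∧ c = 0 :=
  ⟨g6_skew_a_eq_zero h3 e1 e2, g6_skew_b_eq_zero h1 e3 e6, g6_skew_c_eq_zero h1 e4 e5⟩

theorem g6_skew_derivation_zero (α β γ δ a b c : ℝ)
    (h1 : α + δ ≠ 0) (h2 : α * γ - β * δ = 0) (h3 : (γ, δ) ≠ (β, α))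
    (e1 : (α - δ) * a = 0) (e2 : (β - γ) * a = 0)
    (e3 : α * b - β * c = 0) (e4 : γ * b - δ * c = 0)
    (e5 : γ * b + α * c = 0) (e6 : δ * b + β * c = 0) :
    a = 0 ∧ b = 0 ∧ c = 0 :=
  g6_skew_derivation_zero_general α β γ δ a b c h1 h3 e1 e2 e3 e4 e5 e6
end

section
/- Let α, β, γ, δ ∈ ℝ with α + δ ≠ 0, αγ = 0 and α ≠ δ. Then the only solution (a,b,c) of the system: β(b−c)=αa−γc, βa+αb=δc−βa, βa+αc=δc−βa, β(b−c)=αa−γb, βa+αb=δb−βa, βa+αc=δb−βa, α(c−b)=δ(c−b), β(c−b)=δa+γb, β(c−b)=δa+γc, is a=b=c=0. -/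
theorem g7_skew_derivation_zero_general (α β γ δ a b c : ℝ)
    (h1 : α + δ ≠ 0) (h3 : α ≠ δ)
    (e1 : β * (b - c) = α * a - γ * c)
    (e2 : β * a + α * b = δ * c - β * a)
    (e7 : α * (c - b) = δ * (c - b))
    (e8 : β * (c - b) = δ * a + γ * b) :
    a = 0 ∧ b = 0 ∧ c = 0 := by
  obtain rfl : c = b := sub_eq_zero.mp ((mul_eq_mul_right_iff.mp e7).resolve_left h3)
  obtain rfl : a = 0 :=
    (mul_eq_zero.mp (by linear_combination -e1 - e8 : (α + δ) * a = 0)).resolve_left h1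
  obtain rfl : c = 0 :=
    (mul_eq_mul_right_iff.mp (by linear_combination e2 : α * c = δ * c)).resolve_left h3
  exact ⟨rfl, rfl, rfl⟩

theorem g7_skew_derivation_zero (α β γ δ a b c : ℝ)
    (h1 : α + δ ≠ 0) (h2 : α * γ = 0) (h3 : α ≠ δ)
    (e1 : β * (b - c) = α * a - γ * c)
    (e2 : β * a + α * b = δ * c - β * a)
    (e3 : β * a + α * c = δ * c - β * a)
    (e4 : β * (b - c) = α * a - γ * b)
    (e5 : β * a + α * b = δ * b - β * a)
    (e6 : β * a + α * c = δ * b - β * a)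
    (e7 : α * (c - b) = δ * (c - b))
    (e8 : β * (c - b) = δ * a + γ * b)
    (e9 : β * (c - b) = δ * a + γ * c) :
    a = 0 ∧ b = 0 ∧ c = 0 :=
  g7_skew_derivation_zero_general α β γ δ a b c h1 h3 e1 e2 e7 e8
end

section
/- In the Lie algebra 𝔤₅, a nonzero vector X = x₁e₁ + x₂e₂ (with x₃ = 0) is a geodesic vector with constant k = 0 if and only if αx₁² + (β+γ)x₁x₂ + δx₂² = 0. -/
theorem lor_br5_horizontal (α β γ δ x₁ x₂ : ℝ) (Y : ℝ × ℝ × ℝ) :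
    lor (br5 α β γ δ (x₁, x₂, 0) Y) (x₁, x₂, 0) =
      Y.2.2 * (α * x₁ ^ 2 + (β + γ) * x₁ * x₂ + δ * x₂ ^ 2) := by
  simp only [lor, br5]
  ring

theorem g5_horizontal_geodesic_general (α β γ δ : ℝ) (x₁ x₂ : ℝ) :
    (∀ Y : ℝ × ℝ × ℝ,
        lor (br5 α β γ δ (x₁, x₂, 0) Y) (x₁, x₂, 0) = 0 * lor (x₁, x₂, 0) Y)
      ↔ α * x₁ ^ 2 + (β + γ) * x₁ * x₂ + δ * x₂ ^ 2 = 0 := by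
  simp only [lor_br5_horizontal, zero_mul]
  constructor
  · intro h
    simpa using h (0, 0, 1)
  · intro h Y
    rw [h, mul_zero]

theorem g5_horizontal_geodesic (α β γ δ : ℝ) (h1 : α + δ ≠ 0)
    (h2 : α * γ + β * δ = 0) (x₁ x₂ : ℝ) (hX : (x₁, x₂) ≠ (0, 0)) :
    (∀ Y : ℝ × ℝ × ℝ,
        lor (br5 α β γ δ (x₁, x₂, 0) Y) (x₁, x₂, 0) = 0 * lor (x₁, x₂, 0) Y)
      ↔ α * x₁ ^ 2 + (β + γ) * x₁ * x₂ + δ * x₂ ^ 2 = 0 :=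
  g5_horizontal_geodesic_general α β γ δ x₁ x₂
end

section
/- In the Lie algebra 𝔤₅ with α + δ ≠ 0, αγ + βδ = 0, a null vector X = x₁e₁ + x₂e₂ + x₃e₃ (so x₁² + x₂² = x₃², X ≠ 0) is a geodesic vector for some k ∈ ℝ if and only if γx₁² + (δ−α)x₁x₂ − βx₂² = 0. -/
/-!
Since `⟨[X, Y], X⟩ = ⟨Y, ad_X^* X⟩` and the Lorentzian form is nondegenerate, `X` is geodesic
exactly when `ad_X^* X = k X`. Writing `u = αx₁ + βx₂`, `v = γx₁ + δx₂`, one finds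
`ad_X^* X = (-x₃u, -x₃v, -(x₁u + x₂v))`, and the quadratic form in the statement is `x₁v - x₂u`.
For a null `X ≠ 0` we have `x₃ ≠ 0`, and then `ad_X^* X ∥ X` iff `(u, v) ∥ (x₁, x₂)`: taking `k`
from the third coordinate, the first two match by `x₁² + x₂² = x₃²`.
-/

theorem lor_eq_mul_lor_iff {ξ X : ℝ × ℝ × ℝ} {k : ℝ} :
    (∀ Y, lor ξ Y = k * lor X Y) ↔ ξ = k • X := by
  constructor
  · intro h
    have h₁ := h (1, 0, 0)
    have h₂ := h (0, 1, 0)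
    have h₃ := h (0, 0, 1)
    simp only [lor, mul_one, mul_zero, add_zero, zero_add, sub_zero, zero_sub] at h₁ h₂ h₃
    ext <;> simp only [Prod.smul_fst, Prod.smul_snd, smul_eq_mul] <;> linarith
  · rintro rfl Y
    simp only [lor, Prod.smul_fst, Prod.smul_snd, smul_eq_mul]
    ring

/-- `ad_X^* X`, the `lor`-adjoint of `ad_X = br5 α β γ δ X` applied to `X`. -/
def br5AdjSelf (α β γ δ : ℝ) (X : ℝ × ℝ × ℝ) : ℝ × ℝ × ℝ :=
  (-X.2.2 * (α * X.1 + β * X.2.1), -X.2.2 * (γ * X.1 + δ * X.2.1),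
    -(X.1 * (α * X.1 + β * X.2.1) + X.2.1 * (γ * X.1 + δ * X.2.1)))

theorem lor_br5_self_right (α β γ δ : ℝ) (X Y : ℝ × ℝ × ℝ) :
    lor (br5 α β γ δ X Y) X = lor (br5AdjSelf α β γ δ X) Y := by
  simp only [lor, br5, br5AdjSelf]
  ring

theorem ne_zero_of_sq_add_sq_eq_sq {x₁ x₂ x₃ : ℝ} (hnull : x₁ ^ 2 + x₂ ^ 2 = x₃ ^ 2)
    (hne : (x₁, x₂, x₃) ≠ (0, 0, 0)) : x₃ ≠ 0 := by
  rintro rfl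
  have hx₁ : x₁ = 0 := by nlinarith [sq_nonneg x₁, sq_nonneg x₂]
  have hx₂ : x₂ = 0 := by nlinarith [sq_nonneg x₁, sq_nonneg x₂]
  exact hne (by rw [hx₁, hx₂])

theorem exists_br5AdjSelf_eq_smul_iff (α β γ δ : ℝ) {x₁ x₂ x₃ : ℝ}
    (hnull : x₁ ^ 2 + x₂ ^ 2 = x₃ ^ 2) (hx₃ : x₃ ≠ 0) :
    (∃ k : ℝ, br5AdjSelf α β γ δ (x₁, x₂, x₃) = k • (x₁, x₂, x₃))
      ↔ γ * x₁ ^ 2 + (δ - α) * x₁ * x₂ - β * x₂ ^ 2 = 0 := by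
  simp only [br5AdjSelf, Prod.smul_mk, smul_eq_mul, Prod.mk.injEq]
  constructor
  · rintro ⟨k, hu, hv, -⟩
    have h : x₃ * (γ * x₁ ^ 2 + (δ - α) * x₁ * x₂ - β * x₂ ^ 2) = 0 := by
      linear_combination x₂ * hu - x₁ * hv
    exact (mul_eq_zero.mp h).resolve_left hx₃
  · intro hQ
    refine ⟨-(x₁ * (α * x₁ + β * x₂) + x₂ * (γ * x₁ + δ * x₂)) / x₃, ?_, ?_, ?_⟩
    · field_simp
      linear_combination (α * x₁ + β * x₂) * hnull + x₂ * hQ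
    · field_simp
      linear_combination (γ * x₁ + δ * x₂) * hnull - x₁ * hQ
    · field_simp

theorem g5_null_geodesic_general (α β γ δ : ℝ) (x₁ x₂ x₃ : ℝ)
    (hnull : x₁ ^ 2 + x₂ ^ 2 = x₃ ^ 2) (hne : (x₁, x₂, x₃) ≠ (0, 0, 0)) :
    (∃ k : ℝ, ∀ Y : ℝ × ℝ × ℝ,
        lor (br5 α β γ δ (x₁, x₂, x₃) Y) (x₁, x₂, x₃) = k * lor (x₁, x₂, x₃) Y)
      ↔ γ * x₁ ^ 2 + (δ - α) * x₁ * x₂ - β * x₂ ^ 2 = 0 := by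
  simp only [lor_br5_self_right, lor_eq_mul_lor_iff]
  exact exists_br5AdjSelf_eq_smul_iff α β γ δ hnull (ne_zero_of_sq_add_sq_eq_sq hnull hne)

theorem g5_null_geodesic (α β γ δ : ℝ) (h1 : α + δ ≠ 0)
    (h2 : α * γ + β * δ = 0) (x₁ x₂ x₃ : ℝ)
    (hnull : x₁ ^ 2 + x₂ ^ 2 = x₃ ^ 2) (hne : (x₁, x₂, x₃) ≠ (0, 0, 0)) :
    (∃ k : ℝ, ∀ Y : ℝ × ℝ × ℝ,
        lor (br5 α β γ δ (x₁, x₂, x₃) Y) (x₁, x₂, x₃) = k * lor (x₁, x₂, x₃) Y)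
      ↔ γ * x₁ ^ 2 + (δ - α) * x₁ * x₂ - β * x₂ ^ 2 = 0 :=
  g5_null_geodesic_general α β γ δ x₁ x₂ x₃ hnull hne
end

section
/- Let α, β, γ, δ ∈ ℝ with α + δ ≠ 0, αγ + βδ = 0, (α,β) ≠ (0,0), (γ,δ) ≠ (0,0), and (α−δ)² + 4βγ < 0. Then there is no nonzero null vector X ∈ 𝔤₅ that is a geodesic vector: i.e., there is no (x₁,x₂,x₃) ≠ 0 with x₁² + x₂² = x₃² and γx₁² + (δ−α)x₁x₂ − βx₂² = 0. -/
/-! Multiplying the quadratic condition by `4γ` completes the square: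
`(2γx₁ + (δ - α)x₂)² = ((α - δ)² + 4βγ) x₂²`. A negative discriminant forces `x₂ = 0`,
then `x₁ = 0`, and the null condition gives `x₃ = 0`. -/

theorem eq_zero_of_discrim_neg_of_quadratic_eq_zero {a b c x y : ℝ} (hd : discrim a b c < 0)
    (hq : a * x ^ 2 + b * x * y + c * y ^ 2 = 0) : x = 0 ∧ y = 0 := by
  have ha : a ≠ 0 := by
    rintro rfl
    rw [discrim] at hd
    nlinarith [sq_nonneg b]
  have hsq : (2 * a * x + b * y) ^ 2 = discrim a b c * y ^ 2 := by
    rw [discrim]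
    linear_combination 4 * a * hq
  have hy : y = 0 := by
    have : y ^ 2 = 0 := by nlinarith [sq_nonneg (2 * a * x + b * y), sq_nonneg y]
    exact pow_eq_zero_iff two_ne_zero |>.mp this
  subst hy
  have : a * x ^ 2 = 0 := by simpa using hq
  exact ⟨pow_eq_zero_iff two_ne_zero |>.mp ((mul_eq_zero.mp this).resolve_left ha), rfl⟩

theorem g5_no_null_geodesic_general (α β γ δ : ℝ)
    (h5 : (α - δ) ^ 2 + 4 * β * γ < 0) :
    ¬ ∃ x₁ x₂ x₃ : ℝ, (x₁, x₂, x₃) ≠ (0, 0, 0) ∧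
      x₁ ^ 2 + x₂ ^ 2 = x₃ ^ 2 ∧
      γ * x₁ ^ 2 + (δ - α) * x₁ * x₂ - β * x₂ ^ 2 = 0 := by
  rintro ⟨x₁, x₂, x₃, hne, hnull, hq⟩
  obtain ⟨rfl, rfl⟩ := eq_zero_of_discrim_neg_of_quadratic_eq_zero (a := γ) (b := δ - α) (c := -β)
    (x := x₁) (y := x₂) (by rw [discrim]; linarith) (by linear_combination hq)
  have hx₃ : x₃ = 0 := pow_eq_zero_iff two_ne_zero |>.mp (by linear_combination -hnull)
  exact hne (by rw [hx₃])

theorem g5_no_null_geodesic (α β γ δ : ℝ) (h1 : α + δ ≠ 0)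
    (h2 : α * γ + β * δ = 0) (h3 : (α, β) ≠ (0, 0)) (h4 : (γ, δ) ≠ (0, 0))
    (h5 : (α - δ) ^ 2 + 4 * β * γ < 0) :
    ¬ ∃ x₁ x₂ x₃ : ℝ, (x₁, x₂, x₃) ≠ (0, 0, 0) ∧
      x₁ ^ 2 + x₂ ^ 2 = x₃ ^ 2 ∧
      γ * x₁ ^ 2 + (δ - α) * x₁ * x₂ - β * x₂ ^ 2 = 0 :=
  g5_no_null_geodesic_general α β γ δ h5
end

section
/- Let α, β, γ, δ ∈ ℝ with α + δ ≠ 0, αγ + βδ = 0, (α,β) ≠ (0,0) ≠ (γ,δ), (α−δ)² + 4βγ < 0 and (β+γ)² − 4αδ < 0. Then every geodesic vector of 𝔤₅ is a real multiple of e₃; in particular every homogeneous geodesic direction is timelike. -/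
theorem eq_zero_of_binary_form_eq_zero_of_discrim_neg {a b c x y : ℝ} (hd : discrim a b c < 0)
    (h : a * x ^ 2 + b * x * y + c * y ^ 2 = 0) : x = 0 ∧ y = 0 := by
  rw [discrim] at hd
  have hsq : (2 * a * x + b * y) ^ 2 + (4 * a * c - b ^ 2) * y ^ 2 = 0 := by
    linear_combination 4 * a * h
  have hy : y = 0 := by
    by_contra hy
    have : 0 < (4 * a * c - b ^ 2) * y ^ 2 := mul_pos (by linarith) (by positivity)
    nlinarith [sq_nonneg (2 * a * x + b * y)]
  have ha : a ≠ 0 := by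
    rintro rfl
    nlinarith [sq_nonneg b]
  subst hy
  exact ⟨by simpa [ha] using h, rfl⟩

def IsGeodesicVector (α β γ δ : ℝ) (X : ℝ × ℝ × ℝ) (k : ℝ) : Prop :=
  ∀ Y : ℝ × ℝ × ℝ, lor (br5 α β γ δ X Y) X = k * lor X Y

section Geodesic

variable {α β γ δ x y z k : ℝ}

theorem br5_geodesic_form_eq (hX : IsGeodesicVector α β γ δ (x, y, z) k) :
    α * x ^ 2 + (β + γ) * x * y + δ * y ^ 2 = -k * z := by
  have e3 := hX (0, 0, 1)
  simp only [lor, br5] at e3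
  linear_combination e3

theorem br5_geodesic_mul_form_eq_zero (hX : IsGeodesicVector α β γ δ (x, y, z) k) :
    z * (-γ * x ^ 2 + (α - δ) * x * y + β * y ^ 2) = 0 := by
  have e1 := hX (1, 0, 0)
  have e2 := hX (0, 1, 0)
  simp only [lor, br5] at e1 e2
  linear_combination x * e2 - y * e1

theorem br5_geodesic_horizontal_eq_zero
    (hX : IsGeodesicVector α β γ δ (x, y, z) k)
    (h5 : (α - δ) ^ 2 + 4 * β * γ < 0) (h6 : (β + γ) ^ 2 - 4 * α * δ < 0) : x = 0 ∧ y = 0 := by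
  rcases eq_or_ne z 0 with rfl | hz
  · refine eq_zero_of_binary_form_eq_zero_of_discrim_neg (a := α) (b := β + γ) (c := δ) ?_ ?_
    · rwa [discrim]
    · simpa using br5_geodesic_form_eq hX
  · refine eq_zero_of_binary_form_eq_zero_of_discrim_neg (a := -γ) (b := α - δ) (c := β) ?_ ?_
    · rw [discrim]; linarith
    · exact (mul_eq_zero.mp (br5_geodesic_mul_form_eq_zero hX)).resolve_left hz

end Geodesic

theorem g5_only_timelike_geodesics_general (α β γ δ : ℝ)
    (h5 : (α - δ) ^ 2 + 4 * β * γ < 0) (h6 : (β + γ) ^ 2 - 4 * α * δ < 0)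
    (X : ℝ × ℝ × ℝ) (k : ℝ)
    (hgeo : ∀ Y : ℝ × ℝ × ℝ, lor (br5 α β γ δ X Y) X = k * lor X Y) :
    (∃ t : ℝ, X = ((0 : ℝ), (0 : ℝ), t)) ∧ (X ≠ 0 → lor X X < 0) := by
  obtain ⟨x, y, z⟩ := X
  obtain ⟨rfl, rfl⟩ := br5_geodesic_horizontal_eq_zero hgeo h5 h6
  refine ⟨⟨z, rfl⟩, fun hne => ?_⟩
  have hz : z ≠ 0 := by
    rintro rfl
    exact hne rfl
  simpa [lor] using mul_self_pos.mpr hz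

theorem g5_only_timelike_geodesics (α β γ δ : ℝ) (h1 : α + δ ≠ 0)
    (h2 : α * γ + β * δ = 0) (h3 : (α, β) ≠ (0, 0)) (h4 : (γ, δ) ≠ (0, 0))
    (h5 : (α - δ) ^ 2 + 4 * β * γ < 0) (h6 : (β + γ) ^ 2 - 4 * α * δ < 0)
    (X : ℝ × ℝ × ℝ) (k : ℝ)
    (hgeo : ∀ Y : ℝ × ℝ × ℝ, lor (br5 α β γ δ X Y) X = k * lor X Y) :
    (∃ t : ℝ, X = ((0 : ℝ), (0 : ℝ), t)) ∧ (X ≠ 0 → lor X X < 0) :=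
  g5_only_timelike_geodesics_general α β γ δ h5 h6 X k hgeo
end
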